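/- Common support of soft-optimal trajectory laws (Proposition common_support): Let β > 0 and let r, r′ be bounded measurable rewards. Then the trajectory laws P^{π*_r} and P^{π*_{r′}} are mutually absolutely continuous, and the Radon–Nikodym derivative is given for P^{π*_{r′}}-almost every trajectory τ = (s₁,a₁,…,s_T,a_T) by dP^{π*_r}/dP^{π*_{r′}}(τ) = Π_{t=1}^T π*_{t,r}(a_t|s_t) / π*_{t,r′}(a_t|s_t), which takes values in (0, ∞). -/

import Mathlib

open MeasureTheory ProbabilityTheory Real
open scoped ENNReal RealInnerProductSpace

noncomputable section

namespace IRL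

variable {S A : Type*} [MeasurableSpace S] [MeasurableSpace A]

/-- A reward tuple `(r_t)` of bounded measurable functions. -/
def IsBddReward (r : ℕ → S → A → ℝ) : Prop :=
  ∀ t, Measurable (fun q : S × A => r t q.1 q.2) ∧ ∃ C, ∀ s a, |r t s a| ≤ C

/-- `p` is a family of `ν`-probability densities of a Markov policy. -/
def IsPolicyDensity (ν : Measure A) (p : ℕ → S → A → ℝ) : Prop :=
  (∀ t, Measurable (fun q : S × A => p t q.1 q.2)) ∧ (∀ t s a, 0 ≤ p t s a) ∧
    (∀ t s, ∫ a, p t s a ∂ν = 1)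

/-- the log-densities `log π_t` are bounded (in particular the densities are positive). -/
def HasBddLogDensity (p : ℕ → S → A → ℝ) : Prop :=
  ∀ t, (∀ s a, 0 < p t s a) ∧ ∃ C, ∀ s a, |Real.log (p t s a)| ≤ C

variable (T : ℕ) (P : ℕ → Kernel (S × A) S) (ν : Measure A)

/-- Soft-optimal value function `V*_{t,r}` (backward recursion, `V* t ≡ 0` for `t > T`). -/
def Vstar (β : ℝ) (r : ℕ → S → A → ℝ) (t : ℕ) (s : S) : ℝ :=
  if T < t then 0
  else β * Real.log (∫ a, Real.exp ((r t s a + ∫ s', Vstar β r (t + 1) s' ∂(P t (s, a))) / β) ∂ν)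
termination_by T + 1 - t
decreasing_by omega

/-- Soft-optimal state-action value `Q*_{t,r}`. -/
def Qstar (β : ℝ) (r : ℕ → S → A → ℝ) (t : ℕ) (s : S) (a : A) : ℝ :=
  r t s a + ∫ s', Vstar T P ν β r (t + 1) s' ∂(P t (s, a))

/-- `ν`-density of the soft-optimal policy `π*_r`. -/
def piStar (β : ℝ) (r : ℕ → S → A → ℝ) (t : ℕ) (s : S) (a : A) : ℝ :=
  Real.exp ((Qstar T P ν β r t s a - Vstar T P ν β r t s) / β)

/-- Value function `V^π_{t,r}` of a policy given by densities `p` (with `β = 0` this is the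
unregularized value function `V^{π,0}`). -/
def Vpol (β : ℝ) (p r : ℕ → S → A → ℝ) (t : ℕ) (s : S) : ℝ :=
  if T < t then 0
  else ∫ a,
    (r t s a + (∫ s', Vpol β p r (t + 1) s' ∂(P t (s, a))) - β * Real.log (p t s a)) * p t s a ∂ν
termination_by T + 1 - t
decreasing_by omega

/-- `Q^π_{t,r}` for a policy given by densities `p`. -/
def Qpol (β : ℝ) (p r : ℕ → S → A → ℝ) (t : ℕ) (s : S) (a : A) : ℝ :=
  r t s a + ∫ s', Vpol T P ν β p r (t + 1) s' ∂(P t (s, a))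

/-- Regularized advantage `A^π_{t,r}(s,a) = Q^π - V^π - β log π_t(a|s)`. -/
def Apol (β : ℝ) (p r : ℕ → S → A → ℝ) (t : ℕ) (s : S) (a : A) : ℝ :=
  Qpol T P ν β p r t s a - Vpol T P ν β p r t s - β * Real.log (p t s a)

variable (P0 : Measure S)

/-- Optimal value `J*(r) = ∫ V*_{1,r} dP₀`. -/
def Jstar (β : ℝ) (r : ℕ → S → A → ℝ) : ℝ := ∫ s, Vstar T P ν β r 1 s ∂P0

/-- Expected (regularized) return `J(r,π)` of a density policy. -/
def Jpol (β : ℝ) (p r : ℕ → S → A → ℝ) : ℝ := ∫ s, Vpol T P ν β p r 1 s ∂P0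

/-- Iterated expectation, from time `t` in state `s`, of a trajectory functional `g` under a
(kernel) Markov policy `π`; coordinates of the trajectory outside `{1,…,T}` are irrelevant
junk values. -/
def polExp [Nonempty S] [Nonempty A] (pol : ℕ → Kernel S A) (g : (ℕ → S × A) → ℝ) (t : ℕ)
    (s : S) : ℝ :=
  if T < t then g (fun _ => (Classical.arbitrary S, Classical.arbitrary A))
  else ∫ a, ∫ s', polExp pol (fun τ => g (Function.update τ t (s, a))) (t + 1) s' ∂(P t (s, a))
    ∂(pol t s)
termination_by T + 1 - t
decreasing_by omega

/-- `μ` is the trajectory law `P^π` of the Markov policy `π` (with initial distribution `P₀`),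
characterized through integrals of all bounded measurable trajectory functionals. -/
def IsTrajLaw [Nonempty S] [Nonempty A] (pol : ℕ → Kernel S A) (μ : Measure (ℕ → S × A)) : Prop :=
  IsProbabilityMeasure μ ∧
    ∀ g : (ℕ → S × A) → ℝ, Measurable g → (∃ C, ∀ τ, |g τ| ≤ C) →
      ∫ τ, g τ ∂μ = ∫ s, polExp T P pol g 1 s ∂P0

/-- The kernel `s ↦ p t s ⬝ ν` of a policy given by densities. -/
def densKernel [IsFiniteMeasure ν] (p : ℕ → S → A → ℝ) (t : ℕ) : Kernel S A :=
  Kernel.withDensity (Kernel.const S ν) fun s a => ENNReal.ofReal (p t s a)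

open Classical in
/-- Kullback–Leibler divergence `∫ log (dμ/dμ') dμ` if `μ ≪ μ'` (`∞` otherwise). -/
def KL {X : Type*} [MeasurableSpace X] (μ μ' : Measure X) : ℝ≥0∞ :=
  if μ ≪ μ' ∧ Integrable (fun x => Real.log (μ.rnDeriv μ' x).toReal) μ then
    ENNReal.ofReal (∫ x, Real.log (μ.rnDeriv μ' x).toReal ∂μ)
  else ⊤

/-- Squared Hellinger distance, computed with the dominating measure `μ + μ'`. -/
def sqHellinger {X : Type*} [MeasurableSpace X] (μ μ' : Measure X) : ℝ :=
  ∫ x, (Real.sqrt ((μ.rnDeriv (μ + μ') x).toReal)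
      - Real.sqrt ((μ'.rnDeriv (μ + μ') x).toReal)) ^ 2 ∂(μ + μ')

/-- Second directional derivative. -/
def D2 {E : Type*} [NormedAddCommGroup E] [NormedSpace ℝ E] (F : E → ℝ) (θ ξ ζ : E) : ℝ :=
  fderiv ℝ (fun x => fderiv ℝ F x ζ) θ ξ

/-- Third directional derivative. -/
def D3 {E : Type*} [NormedAddCommGroup E] [NormedSpace ℝ E] (F : E → ℝ) (θ ξ ζ ω : E) : ℝ :=
  fderiv ℝ (fun x => D2 F x ζ ω) θ ξ

end IRL

open MeasureTheory ProbabilityTheory Real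
open scoped ENNReal

/-! Since the rewards are bounded, backward induction shows that `V*` and `Q*` are bounded, so
the soft-optimal densities `π*_t = exp ((Q*_t - V*_t) / β)` are bounded away from `0` and `∞`.
Unfolding the trajectory law as an iterated integral and replacing `π*_{t,r} ν` by
`(π*_{t,r} / π*_{t,r'}) π*_{t,r'} ν` at every step gives `P^{π*_r} = ρ • P^{π*_{r'}}` with
`ρ = ∏_t π*_{t,r} / π*_{t,r'}`, a bounded positive density; by symmetry the laws are mutually
absolutely continuous. -/

namespace IRL

variable {S A : Type*}

theorem abs_integral_le_of_forall_abs_le {X : Type*} [MeasurableSpace X] {μ : Measure X}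
    [IsProbabilityMeasure μ] {f : X → ℝ} {C : ℝ} (hf : ∀ x, |f x| ≤ C) :
    |∫ x, f x ∂μ| ≤ C := by
  simpa using norm_integral_le_of_norm_le_const (μ := μ)
    (ae_of_all _ fun x => (Real.norm_eq_abs (f x)).trans_le (hf x))

theorem abs_log_integral_exp_le [MeasurableSpace A] [Nonempty A] {ν : Measure A}
    [IsFiniteMeasure ν] {g : A → ℝ} {M : ℝ} (hg : Measurable g) (hM : ∀ a, |g a| ≤ M) :
    |log (∫ a, exp (g a) ∂ν)| ≤ M + |log (ν.real Set.univ)| := by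
  have hM₀ : 0 ≤ M := (abs_nonneg _).trans (hM (Classical.arbitrary A))
  rcases eq_zero_or_neZero ν with rfl | hν
  · -- the integral is `0`, and `log 0 = 0`
    simpa using hM₀
  have hc : 0 < ν.real Set.univ := measureReal_univ_pos
  have hint : Integrable (fun a => exp (g a)) ν :=
    (integrable_const (exp M)).mono' (measurable_exp.comp hg).aestronglyMeasurable
      (ae_of_all _ fun a => by
        rw [norm_of_nonneg (exp_pos _).le]
        exact exp_le_exp.2 ((le_abs_self _).trans (hM a)))
  have hlow : exp (-M) * ν.real Set.univ ≤ ∫ a, exp (g a) ∂ν := by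
    simpa [mul_comm] using integral_mono (integrable_const _) hint
      fun a => exp_le_exp.2 (neg_le_of_abs_le (hM a))
  have hup : ∫ a, exp (g a) ∂ν ≤ exp M * ν.real Set.univ := by
    simpa [mul_comm] using integral_mono hint (integrable_const _)
      fun a => exp_le_exp.2 ((le_abs_self _).trans (hM a))
  rw [abs_le]
  constructor
  · calc -(M + |log (ν.real Set.univ)|) ≤ -M + log (ν.real Set.univ) := by
          linarith [neg_abs_le (log (ν.real Set.univ))]
      _ = log (exp (-M) * ν.real Set.univ) := by rw [log_mul (exp_pos _).ne' hc.ne', log_exp]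
      _ ≤ log (∫ a, exp (g a) ∂ν) := log_le_log (by positivity) hlow
  · calc log (∫ a, exp (g a) ∂ν) ≤ log (exp M * ν.real Set.univ) :=
          log_le_log (integral_exp_pos hint) hup
      _ = M + log (ν.real Set.univ) := by rw [log_mul (exp_pos _).ne' hc.ne', log_exp]
      _ ≤ M + |log (ν.real Set.univ)| := by linarith [le_abs_self (log (ν.real Set.univ))]

section SoftOptimal

variable [MeasurableSpace S] [MeasurableSpace A] {T : ℕ} {P : ℕ → Kernel (S × A) S}
  {ν : Measure A} {β : ℝ} {r : ℕ → S → A → ℝ}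

theorem Vstar_of_lt {t : ℕ} (h : T < t) (s : S) : Vstar T P ν β r t s = 0 := by
  rw [Vstar, if_pos h]

theorem Vstar_of_le {t : ℕ} (h : t ≤ T) (s : S) :
    Vstar T P ν β r t s = β * log (∫ a, exp (Qstar T P ν β r t s a / β) ∂ν) := by
  rw [Vstar, if_neg (not_lt.2 h)]
  rfl

variable [∀ t, IsMarkovKernel (P t)]

theorem Qstar_measurable_bdd (hr : IsBddReward r) {t : ℕ} {CV : ℝ}
    (hV : Measurable (Vstar T P ν β r (t + 1))) (hCV : ∀ s, |Vstar T P ν β r (t + 1) s| ≤ CV) :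
    Measurable (fun q : S × A => Qstar T P ν β r t q.1 q.2) ∧
      ∃ C, ∀ s a, |Qstar T P ν β r t s a| ≤ C := by
  obtain ⟨hr_meas, Cr, hCr⟩ := hr t
  exact ⟨hr_meas.add hV.stronglyMeasurable.integral_kernel.measurable,
    Cr + CV, fun s a => (abs_add_le _ _).trans
      (add_le_add (hCr s a) (abs_integral_le_of_forall_abs_le hCV))⟩

variable [IsFiniteMeasure ν] [Nonempty A]

theorem Vstar_measurable_bdd (hr : IsBddReward r) (t : ℕ) :
    Measurable (Vstar T P ν β r t) ∧ ∃ C, ∀ s, |Vstar T P ν β r t s| ≤ C := by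
  rcases lt_or_ge T t with h | h
  · rw [funext (Vstar_of_lt h)]
    exact ⟨measurable_const, 0, fun _ => by simp⟩
  obtain ⟨hV, CV, hCV⟩ := Vstar_measurable_bdd hr (t + 1)
  obtain ⟨hQ, CQ, hCQ⟩ := Qstar_measurable_bdd hr hV hCV
  have hQβ : ∀ s a, |Qstar T P ν β r t s a / β| ≤ CQ / |β| := fun s a => by
    rw [abs_div]
    gcongr
    exact hCQ s a
  refine ⟨?_, |β| * (CQ / |β| + |log (ν.real Set.univ)|), fun s => ?_⟩
  · rw [funext (Vstar_of_le h)]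
    exact measurable_const.mul
      (hQ.div_const β).exp.stronglyMeasurable.integral_prod_right'.measurable.log
  · rw [Vstar_of_le h, abs_mul]
    gcongr
    exact abs_log_integral_exp_le ((hQ.div_const β).comp measurable_prodMk_left) (hQβ s)
termination_by T + 1 - t
decreasing_by omega

theorem isBddReward_Qstar (hr : IsBddReward r) : IsBddReward (Qstar T P ν β r) := fun t =>
  let ⟨hV, _, hCV⟩ := Vstar_measurable_bdd hr (t + 1)
  Qstar_measurable_bdd hr hV hCV

theorem measurable_piStar (hr : IsBddReward r) (t : ℕ) :
    Measurable (fun q : S × A => piStar T P ν β r t q.1 q.2) :=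
  (((isBddReward_Qstar hr t).1.sub
    ((Vstar_measurable_bdd hr t).1.comp measurable_fst)).div_const β).exp

theorem hasBddLogDensity_piStar (hr : IsBddReward r) : HasBddLogDensity (piStar T P ν β r) := by
  intro t
  obtain ⟨CQ, hCQ⟩ := (isBddReward_Qstar (T := T) (P := P) (ν := ν) (β := β) hr t).2
  obtain ⟨CV, hCV⟩ := (Vstar_measurable_bdd (T := T) (P := P) (ν := ν) (β := β) hr t).2
  refine ⟨fun s a => exp_pos _, (CQ + CV) / |β|, fun s a => ?_⟩
  rw [piStar, log_exp, abs_div]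
  gcongr
  exact (abs_sub _ _).trans (add_le_add (hCQ s a) (hCV s))

end SoftOptimal

def likelihoodRatio (p p' : ℕ → S → A → ℝ) (t T : ℕ) (τ : ℕ → S × A) : ℝ :=
  ∏ u ∈ Finset.Icc t T, p u (τ u).1 (τ u).2 / p' u (τ u).1 (τ u).2

section LikelihoodRatio

variable {p p' : ℕ → S → A → ℝ} {t T : ℕ}

theorem likelihoodRatio_of_lt (h : T < t) (τ : ℕ → S × A) : likelihoodRatio p p' t T τ = 1 := by
  rw [likelihoodRatio, Finset.Icc_eq_empty_of_lt h, Finset.prod_empty]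

theorem likelihoodRatio_update (h : t ≤ T) (τ : ℕ → S × A) (s : S) (a : A) :
    likelihoodRatio p p' t T (Function.update τ t (s, a))
      = p t s a / p' t s a * likelihoodRatio p p' (t + 1) T τ := by
  rw [likelihoodRatio, ← Finset.insert_Icc_add_one_left_eq_Icc h,
    Finset.prod_insert (by simp), Function.update_self]
  congr 1
  refine Finset.prod_congr rfl fun u hu => ?_
  rw [Function.update_of_ne (by simp only [Finset.mem_Icc] at hu; omega)]

theorem measurable_likelihoodRatio [MeasurableSpace S] [MeasurableSpace A]
    (hp : ∀ t, Measurable (fun q : S × A => p t q.1 q.2))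
    (hp' : ∀ t, Measurable (fun q : S × A => p' t q.1 q.2)) :
    Measurable (likelihoodRatio p p' t T) :=
  Finset.measurable_prod _ fun u _ =>
    ((hp u).comp (measurable_pi_apply u)).div ((hp' u).comp (measurable_pi_apply u))

theorem likelihoodRatio_nonneg (hp : ∀ t s a, 0 ≤ p t s a) (hp' : ∀ t s a, 0 ≤ p' t s a)
    (τ : ℕ → S × A) : 0 ≤ likelihoodRatio p p' t T τ :=
  Finset.prod_nonneg fun _ _ => div_nonneg (hp _ _ _) (hp' _ _ _)

theorem likelihoodRatio_pos (hp : ∀ t s a, 0 < p t s a) (hp' : ∀ t s a, 0 < p' t s a)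
    (τ : ℕ → S × A) : 0 < likelihoodRatio p p' t T τ :=
  Finset.prod_pos fun _ _ => div_pos (hp _ _ _) (hp' _ _ _)

theorem HasBddLogDensity.exists_likelihoodRatio_le (hp : HasBddLogDensity p)
    (hp' : HasBddLogDensity p') : ∃ C, ∀ τ, likelihoodRatio p p' t T τ ≤ C := by
  choose C hC using fun u => (hp u).2
  choose C' hC' using fun u => (hp' u).2
  have hratio : ∀ u s a, p u s a / p' u s a ≤ exp (C u + C' u) := fun u s a =>
    calc p u s a / p' u s a = exp (log (p u s a) - log (p' u s a)) := by
          rw [exp_sub, exp_log ((hp u).1 s a), exp_log ((hp' u).1 s a)]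
      _ ≤ exp (C u + C' u) := exp_le_exp.2 <| by
          linarith [le_abs_self (log (p u s a)), neg_abs_le (log (p' u s a)),
            hC u s a, hC' u s a]
  exact ⟨∏ u ∈ Finset.Icc t T, exp (C u + C' u), fun τ => Finset.prod_le_prod
    (fun u _ => div_nonneg ((hp u).1 _ _).le ((hp' u).1 _ _).le) fun u _ => hratio u _ _⟩

end LikelihoodRatio

section ChangeOfMeasure

variable [MeasurableSpace S] [MeasurableSpace A] [Nonempty S] [Nonempty A] {T : ℕ}
  {P : ℕ → Kernel (S × A) S} {ν : Measure A} [IsFiniteMeasure ν] {p p' : ℕ → S → A → ℝ}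

theorem polExp_const_mul (pol : ℕ → Kernel S A) (c : ℝ) (t : ℕ) (g : (ℕ → S × A) → ℝ)
    (s : S) : polExp T P pol (fun τ => c * g τ) t s = c * polExp T P pol g t s := by
  rw [polExp, polExp]
  split_ifs
  · rfl
  · have ih : ∀ (a : A) (s' : S),
        polExp T P pol (fun τ => c * g (Function.update τ t (s, a))) (t + 1) s'
          = c * polExp T P pol (fun τ => g (Function.update τ t (s, a))) (t + 1) s' :=
      fun a s' => polExp_const_mul pol c (t + 1) _ s'
    simp only [ih, integral_const_mul]
termination_by T + 1 - t
decreasing_by omega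

omit [Nonempty S] [Nonempty A] in
theorem integral_densKernel {t : ℕ} (hp : Measurable (fun q : S × A => p t q.1 q.2))
    (hnn : ∀ s a, 0 ≤ p t s a) (s : S) (f : A → ℝ) :
    ∫ a, f a ∂(densKernel ν p t s) = ∫ a, p t s a * f a ∂ν := by
  rw [densKernel, Kernel.withDensity_apply (f := fun s a => ENNReal.ofReal (p t s a)) _
      (ENNReal.measurable_ofReal.comp hp),
    Kernel.const_apply, integral_withDensity_eq_integral_toReal_smul₀
      (f := fun a => ENNReal.ofReal (p t s a))
      (ENNReal.measurable_ofReal.comp (hp.comp measurable_prodMk_left)).aemeasurable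
      (ae_of_all _ fun _ => ENNReal.ofReal_lt_top)]
  simp only [ENNReal.toReal_ofReal (hnn s _), smul_eq_mul]

theorem polExp_densKernel_eq (hp : ∀ t, Measurable (fun q : S × A => p t q.1 q.2))
    (hp' : ∀ t, Measurable (fun q : S × A => p' t q.1 q.2)) (hnn : ∀ t s a, 0 ≤ p t s a)
    (hpos' : ∀ t s a, 0 < p' t s a) (t : ℕ) (g : (ℕ → S × A) → ℝ) (s : S) :
    polExp T P (densKernel ν p) g t s
      = polExp T P (densKernel ν p') (fun τ => likelihoodRatio p p' t T τ * g τ) t s := by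
  rw [polExp, polExp]
  split_ifs with h
  · rw [likelihoodRatio_of_lt h, one_mul]
  · have ih : ∀ (a : A) (s' : S),
        polExp T P (densKernel ν p) (fun τ => g (Function.update τ t (s, a))) (t + 1) s'
          = polExp T P (densKernel ν p') (fun τ => likelihoodRatio p p' (t + 1) T τ
              * g (Function.update τ t (s, a))) (t + 1) s' :=
      fun a s' => polExp_densKernel_eq hp hp' hnn hpos' (t + 1) _ s'
    simp only [ih, likelihoodRatio_update (not_lt.1 h), mul_assoc, polExp_const_mul,
      integral_const_mul]
    rw [integral_densKernel (hp t) (hnn t), integral_densKernel (hp' t) fun s a => (hpos' t s a).le]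
    simp only [← mul_assoc, mul_div_cancel₀ _ (hpos' t s _).ne']
termination_by T + 1 - t
decreasing_by omega

variable {P0 : Measure S}

theorem IsTrajLaw.integral_eq_integral_likelihoodRatio_mul
    (hp : ∀ t, Measurable (fun q : S × A => p t q.1 q.2))
    (hp' : ∀ t, Measurable (fun q : S × A => p' t q.1 q.2)) (hnn : ∀ t s a, 0 ≤ p t s a)
    (hpos' : ∀ t s a, 0 < p' t s a) {C : ℝ} (hC : ∀ τ, likelihoodRatio p p' 1 T τ ≤ C)
    {μ μ' : Measure (ℕ → S × A)} (hμ : IsTrajLaw T P P0 (densKernel ν p) μ)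
    (hμ' : IsTrajLaw T P P0 (densKernel ν p') μ') {g : (ℕ → S × A) → ℝ} (hg : Measurable g)
    {M : ℝ} (hM : ∀ τ, |g τ| ≤ M) :
    ∫ τ, g τ ∂μ = ∫ τ, likelihoodRatio p p' 1 T τ * g τ ∂μ' := by
  have hρ := likelihoodRatio_nonneg (t := 1) (T := T) hnn fun t s a => (hpos' t s a).le
  rw [hμ.2 g hg ⟨M, hM⟩, hμ'.2 (fun τ => likelihoodRatio p p' 1 T τ * g τ)
    ((measurable_likelihoodRatio hp hp').mul hg) ⟨C * M, fun τ => ?_⟩]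
  · exact integral_congr_ae (ae_of_all _ fun s => polExp_densKernel_eq hp hp' hnn hpos' 1 g s)
  · rw [abs_mul, abs_of_nonneg (hρ τ)]
    exact mul_le_mul (hC τ) (hM τ) (abs_nonneg _) ((hρ τ).trans (hC τ))

theorem IsTrajLaw.eq_withDensity_likelihoodRatio
    (hp : ∀ t, Measurable (fun q : S × A => p t q.1 q.2))
    (hp' : ∀ t, Measurable (fun q : S × A => p' t q.1 q.2)) (hnn : ∀ t s a, 0 ≤ p t s a)
    (hpos' : ∀ t s a, 0 < p' t s a) {C : ℝ} (hC : ∀ τ, likelihoodRatio p p' 1 T τ ≤ C)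
    {μ μ' : Measure (ℕ → S × A)} (hμ : IsTrajLaw T P P0 (densKernel ν p) μ)
    (hμ' : IsTrajLaw T P P0 (densKernel ν p') μ') :
    μ = μ'.withDensity fun τ => ENNReal.ofReal (likelihoodRatio p p' 1 T τ) := by
  have := hμ.1
  have := hμ'.1
  have hρ := likelihoodRatio_nonneg (t := 1) (T := T) hnn fun t s a => (hpos' t s a).le
  have hρ_int : Integrable (likelihoodRatio p p' 1 T) μ' :=
    (integrable_const C).mono' (measurable_likelihoodRatio hp hp').aestronglyMeasurable
      (ae_of_all _ fun τ => by rw [norm_of_nonneg (hρ τ)]; exact hC τ)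
  ext E hE
  have hE_ind : ∀ τ, |E.indicator (1 : (ℕ → S × A) → ℝ) τ| ≤ 1 := fun τ => by
    by_cases hτ : τ ∈ E <;> simp [hτ]
  rw [withDensity_apply _ hE, ← ofReal_integral_eq_lintegral_ofReal hρ_int.restrict
      (ae_of_all _ hρ), ← ENNReal.ofReal_toReal (measure_ne_top μ E)]
  congr 1
  calc (μ E).toReal = ∫ τ, E.indicator 1 τ ∂μ := (integral_indicator_one hE).symm
    _ = ∫ τ, likelihoodRatio p p' 1 T τ * E.indicator 1 τ ∂μ' :=
      hμ.integral_eq_integral_likelihoodRatio_mul hp hp' hnn hpos' hC hμ'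
        (measurable_one.indicator hE) hE_ind
    _ = ∫ τ in E, likelihoodRatio p p' 1 T τ ∂μ' := by
      simp only [← Set.indicator_mul_right, Pi.one_apply, mul_one]
      exact integral_indicator hE

end ChangeOfMeasure

section MutualAbsoluteContinuity

variable [MeasurableSpace S] [MeasurableSpace A] [Nonempty S] [Nonempty A] {T : ℕ}
  {P : ℕ → Kernel (S × A) S} {ν : Measure A} [IsFiniteMeasure ν] {P0 : Measure S}
  {p p' : ℕ → S → A → ℝ} {μ μ' : Measure (ℕ → S × A)}

theorem IsTrajLaw.absolutelyContinuous (hμ : IsTrajLaw T P P0 (densKernel ν p) μ)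
    (hμ' : IsTrajLaw T P P0 (densKernel ν p') μ')
    (hp : ∀ t, Measurable (fun q : S × A => p t q.1 q.2))
    (hp' : ∀ t, Measurable (fun q : S × A => p' t q.1 q.2)) (hpd : HasBddLogDensity p)
    (hpd' : HasBddLogDensity p') : μ ≪ μ' := by
  obtain ⟨C, hC⟩ := hpd.exists_likelihoodRatio_le hpd' (t := 1) (T := T)
  rw [hμ.eq_withDensity_likelihoodRatio hp hp' (fun t s a => ((hpd t).1 s a).le)
    (fun t => (hpd' t).1) hC hμ']
  exact withDensity_absolutelyContinuous _ _

theorem IsTrajLaw.rnDeriv_eq_likelihoodRatio (hμ : IsTrajLaw T P P0 (densKernel ν p) μ)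
    (hμ' : IsTrajLaw T P P0 (densKernel ν p') μ')
    (hp : ∀ t, Measurable (fun q : S × A => p t q.1 q.2))
    (hp' : ∀ t, Measurable (fun q : S × A => p' t q.1 q.2)) (hpd : HasBddLogDensity p)
    (hpd' : HasBddLogDensity p') :
    ∀ᵐ τ ∂μ', (μ.rnDeriv μ' τ).toReal = likelihoodRatio p p' 1 T τ := by
  have := hμ'.1
  obtain ⟨C, hC⟩ := hpd.exists_likelihoodRatio_le hpd' (t := 1) (T := T)
  have hρ := likelihoodRatio_nonneg (t := 1) (T := T) (fun t s a => ((hpd t).1 s a).le)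
    fun t s a => ((hpd' t).1 s a).le
  rw [hμ.eq_withDensity_likelihoodRatio hp hp' (fun t s a => ((hpd t).1 s a).le)
    (fun t => (hpd' t).1) hC hμ']
  filter_upwards [Measure.rnDeriv_withDensity μ' (measurable_likelihoodRatio hp hp').ennreal_ofReal]
    with τ hτ
  rw [hτ, ENNReal.toReal_ofReal (hρ τ)]

end MutualAbsoluteContinuity

end IRL

theorem soft_optimal_trajectory_laws_mutually_ac_general
    {S A : Type*} [MeasurableSpace S] [MeasurableSpace A] [Nonempty S] [Nonempty A]
    (T : ℕ)
    (P0 : Measure S)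
    (P : ℕ → Kernel (S × A) S) [∀ t, IsMarkovKernel (P t)]
    (ν : Measure A) [IsFiniteMeasure ν]
    (β : ℝ)
    (r r' : ℕ → S → A → ℝ) (hr : IRL.IsBddReward r) (hr' : IRL.IsBddReward r')
    (μr μr' : Measure (ℕ → S × A))
    (hμr : IRL.IsTrajLaw T P P0 (IRL.densKernel ν (IRL.piStar T P ν β r)) μr)
    (hμr' : IRL.IsTrajLaw T P P0 (IRL.densKernel ν (IRL.piStar T P ν β r')) μr') :
    μr ≪ μr' ∧ μr' ≪ μr ∧
    (∀ᵐ τ ∂μr', (μr.rnDeriv μr' τ).toReal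
        = ∏ t ∈ Finset.Icc 1 T,
            IRL.piStar T P ν β r t (τ t).1 (τ t).2
              / IRL.piStar T P ν β r' t (τ t).1 (τ t).2) ∧
    (∀ τ : ℕ → S × A, 0 < ∏ t ∈ Finset.Icc 1 T,
        IRL.piStar T P ν β r t (τ t).1 (τ t).2
          / IRL.piStar T P ν β r' t (τ t).1 (τ t).2) := by
  have hm := IRL.measurable_piStar (T := T) (P := P) (ν := ν) (β := β) hr
  have hm' := IRL.measurable_piStar (T := T) (P := P) (ν := ν) (β := β) hr'
  have hd : IRL.HasBddLogDensity (IRL.piStar T P ν β r) := IRL.hasBddLogDensity_piStar hr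
  have hd' : IRL.HasBddLogDensity (IRL.piStar T P ν β r') := IRL.hasBddLogDensity_piStar hr'
  exact ⟨hμr.absolutelyContinuous hμr' hm hm' hd hd',
    hμr'.absolutelyContinuous hμr hm' hm hd' hd,
    hμr.rnDeriv_eq_likelihoodRatio hμr' hm hm' hd hd',
    IRL.likelihoodRatio_pos (fun t => (hd t).1) (fun t => (hd' t).1)⟩

/-- **Common support of soft-optimal trajectory laws** (Proposition `common_support`).
For `β > 0` and bounded measurable rewards `r, r′`, the trajectory laws of the soft-optimal
policies `π*_r` and `π*_{r′}` are mutually absolutely continuous, with Radon–Nikodym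
derivative `dP^{π*_r}/dP^{π*_{r′}}(τ) = Π_t π*_{t,r}(a_t|s_t)/π*_{t,r′}(a_t|s_t)`, a quantity
taking values in `(0,∞)`. -/
theorem soft_optimal_trajectory_laws_mutually_ac
    {S A : Type*} [MeasurableSpace S] [MeasurableSpace A] [Nonempty S] [Nonempty A]
    (T : ℕ) (hT : 1 ≤ T)
    (P0 : Measure S) [IsProbabilityMeasure P0]
    (P : ℕ → Kernel (S × A) S) [∀ t, IsMarkovKernel (P t)]
    (ν : Measure A) [IsFiniteMeasure ν] (hν : ν Set.univ ≠ 0)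
    (β : ℝ) (hβ : 0 < β)
    (r r' : ℕ → S → A → ℝ) (hr : IRL.IsBddReward r) (hr' : IRL.IsBddReward r')
    (μr μr' : Measure (ℕ → S × A))
    (hμr : IRL.IsTrajLaw T P P0 (IRL.densKernel ν (IRL.piStar T P ν β r)) μr)
    (hμr' : IRL.IsTrajLaw T P P0 (IRL.densKernel ν (IRL.piStar T P ν β r')) μr') :
    μr ≪ μr' ∧ μr' ≪ μr ∧
    (∀ᵐ τ ∂μr', (μr.rnDeriv μr' τ).toReal
        = ∏ t ∈ Finset.Icc 1 T,
            IRL.piStar T P ν β r t (τ t).1 (τ t).2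
              / IRL.piStar T P ν β r' t (τ t).1 (τ t).2) ∧
    (∀ τ : ℕ → S × A, 0 < ∏ t ∈ Finset.Icc 1 T,
        IRL.piStar T P ν β r t (τ t).1 (τ t).2
          / IRL.piStar T P ν β r' t (τ t).1 (τ t).2) :=
  soft_optimal_trajectory_laws_mutually_ac_general T P0 P ν β r r' hr hr' μr μr' hμr hμr'
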